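/- arXiv:2208.06907 — 2 statements merged into one kernel-verified Lean document; each statement's English description precedes it below -/
import Mathlib

section
/- For any finite set Y ⊆ 𝒳, any m ∈ ℤ⁺, and any weighted weak tournament 𝒯 ∈ 𝕎𝕋^w_{Y,m}, the margin graph of the profile representation of 𝒯 relative to Y and m equals 𝒯: ℳ(𝔓_{Y,m}(𝒯)) = 𝒯. -/
/- Formalization of the profile representation of (weighted) weak tournaments from
Holliday, Norman, Pacuit, Zahedian, "Impossibility theorems involving weakenings of
expansion consistency and resoluteness in voting". Candidates form an infinite
type `C`. -/

open Classical

noncomputable section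

/-- `L` is a strict linear order on exactly the finite set `s`. -/
def IsStrictLinearOrderOn {C : Type} (s : Finset C) (L : C → C → Prop) : Prop :=
  (∀ x, ¬ L x x) ∧ (∀ x y z, L x y → L y z → L x z) ∧
    (∀ x ∈ s, ∀ y ∈ s, x ≠ y → L x y ∨ L y x) ∧ ∀ x y, L x y → x ∈ s ∧ y ∈ s

/-- Restriction of a relation to a finite set `A`. -/
def restrictRel {C : Type} (A : Finset C) (L : C → C → Prop) : C → C → Prop :=
  fun x y => L x y ∧ x ∈ A ∧ y ∈ A

theorem IsStrictLinearOrderOn.restrict {C : Type} {s A : Finset C} {L : C → C → Prop}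
    (h : IsStrictLinearOrderOn s L) (hA : A ⊆ s) :
    IsStrictLinearOrderOn A (restrictRel A L) := by
  obtain ⟨hirr, htr, htot, hdom⟩ := h
  refine ⟨fun x hx => hirr x hx.1,
    fun x y z hxy hyz => ⟨htr _ _ _ hxy.1 hyz.1, hxy.2.1, hyz.2.2⟩, ?_,
    fun x y hxy => ⟨hxy.2.1, hxy.2.2⟩⟩
  intro x hx y hy hne
  rcases htot x (hA hx) y (hA hy) hne with h' | h'
  · exact Or.inl ⟨h', hx, hy⟩
  · exact Or.inr ⟨h', hy, hx⟩

/-- The image of a relation under the transposition of `a` and `b`: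
`(x, y) ∈ swapRel a b L` iff `(π x, π y) ∈ L` where `π` swaps `a` and `b`. -/
def swapRel {C : Type} (a b : C) (L : C → C → Prop) : C → C → Prop :=
  fun x y => L (Equiv.swap a b x) (Equiv.swap a b y)

theorem IsStrictLinearOrderOn.swapRel_mem {C : Type} {s : Finset C} {L : C → C → Prop}
    (a b : C) (h : IsStrictLinearOrderOn s L) :
    IsStrictLinearOrderOn (s.image (Equiv.swap a b)) (swapRel a b L) := by
  obtain ⟨hirr, htr, htot, hdom⟩ := h
  refine ⟨fun x => hirr _, fun x y z hxy hyz => htr _ _ _ hxy hyz, ?_, ?_⟩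
  · intro x hx y hy hne
    obtain ⟨x', hx', rfl⟩ := Finset.mem_image.mp hx
    obtain ⟨y', hy', rfl⟩ := Finset.mem_image.mp hy
    have hne' : x' ≠ y' := by rintro rfl; exact hne rfl
    have := htot x' hx' y' hy' hne'
    simpa [swapRel, Equiv.swap_apply_self] using this
  · intro x y hxy
    obtain ⟨h1, h2⟩ := hdom _ _ hxy
    exact ⟨Finset.mem_image.mpr ⟨_, h1, Equiv.swap_apply_self a b x⟩,
      Finset.mem_image.mpr ⟨_, h2, Equiv.swap_apply_self a b y⟩⟩

theorem IsStrictLinearOrderOn.of_swapRel {C : Type} {s : Finset C} {L : C → C → Prop}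
    {a b : C} (h : IsStrictLinearOrderOn s (swapRel a b L)) :
    IsStrictLinearOrderOn (s.image (Equiv.swap a b)) L := by
  have h2 := h.swapRel_mem a b
  have heq : swapRel a b (swapRel a b L) = L := by
    funext x y
    simp [swapRel, Equiv.swap_apply_self]
  rwa [heq] at h2

/-- A generalized anonymous profile: an integer-valued function on the strict linear
orders of a finite nonempty set of candidates (encoded as a function on all
relations, supported on the strict linear orders of `cands`). -/
structure GAProfile (C : Type) where
  cands : Finset C
  cands_nonempty : cands.Nonempty
  count : (C → C → Prop) → ℤ
  count_supp : ∀ L, count L ≠ 0 → IsStrictLinearOrderOn cands L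

namespace GAProfile

variable {C : Type}

/-- `P` is an anonymous profile: all ballot counts are nonnegative. -/
def IsAnon (P : GAProfile C) : Prop := ∀ L, 0 ≤ P.count L

/-- The margin `μ_{x,y}(P)` of `x` over `y` in `P`. -/
def margin (P : GAProfile C) (x y : C) : ℤ :=
  (∑ᶠ L : C → C → Prop, if L x y then P.count L else 0) -
    ∑ᶠ L : C → C → Prop, if L y x then P.count L else 0

theorem margin_neg (P : GAProfile C) (x y : C) : P.margin y x = - P.margin x y := by
  simp only [margin]
  ring

/-- The restriction `P|_Z` of a generalized anonymous profile to a nonempty subset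
`Z` of its candidates. -/
def restrict (P : GAProfile C) (Z : Finset C) (hZ : Z.Nonempty) (hsub : Z ⊆ P.cands) :
    GAProfile C where
  cands := Z
  cands_nonempty := hZ
  count := fun L => ∑ᶠ L' : C → C → Prop, if restrictRel Z L' = L then P.count L' else 0
  count_supp := by
    intro L hL
    by_contra hnot
    apply hL
    apply finsum_eq_zero_of_forall_eq_zero
    intro L'
    split_ifs with h
    · by_contra hc
      exact hnot (h ▸ ((P.count_supp L' hc).restrict hsub))
    · rfl

/-- The profile `P_{a⇄b}` obtained by transposing the candidates `a` and `b`. -/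
def swapCands (P : GAProfile C) (a b : C) : GAProfile C where
  cands := P.cands.image (Equiv.swap a b)
  cands_nonempty := P.cands_nonempty.image _
  count := fun L => P.count (swapRel a b L)
  count_supp := fun L h => (P.count_supp _ h).of_swapRel

end GAProfile

/-- A weak tournament: an asymmetric directed graph on a finite nonempty set of
vertices. -/
structure WeakTournament (C : Type) where
  verts : Finset C
  verts_nonempty : verts.Nonempty
  edge : C → C → Prop
  edge_asymm : ∀ x y, edge x y → ¬ edge y x
  edge_dom : ∀ x y, edge x y → x ∈ verts ∧ y ∈ verts

/-- A weighted weak tournament: a weak tournament together with a positive integer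
weight on each edge (normalized to weight `0` off the edges). -/
structure WeightedWeakTournament (C : Type) where
  verts : Finset C
  verts_nonempty : verts.Nonempty
  edge : C → C → Prop
  edge_asymm : ∀ x y, edge x y → ¬ edge y x
  edge_dom : ∀ x y, edge x y → x ∈ verts ∧ y ∈ verts
  wt : C → C → ℤ
  wt_pos : ∀ x y, edge x y → 0 < wt x y
  wt_eq_zero : ∀ x y, ¬ edge x y → wt x y = 0

namespace GAProfile

variable {C : Type}

/-- The majority graph `M(P)` of a generalized anonymous profile. -/
def maj (P : GAProfile C) : WeakTournament C where
  verts := P.cands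
  verts_nonempty := P.cands_nonempty
  edge := fun x y => 0 < P.margin x y ∧ x ∈ P.cands ∧ y ∈ P.cands
  edge_asymm := by
    intro x y h h'
    have hneg := P.margin_neg x y
    have h1 := h.1
    have h2 := h'.1
    omega
  edge_dom := fun x y h => ⟨h.2.1, h.2.2⟩

/-- The margin graph `ℳ(P)` of a generalized anonymous profile. -/
def marg (P : GAProfile C) : WeightedWeakTournament C where
  verts := P.cands
  verts_nonempty := P.cands_nonempty
  edge := fun x y => 0 < P.margin x y ∧ x ∈ P.cands ∧ y ∈ P.cands
  edge_asymm := by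
    intro x y h h'
    have hneg := P.margin_neg x y
    have h1 := h.1
    have h2 := h'.1
    omega
  edge_dom := fun x y h => ⟨h.2.1, h.2.2⟩
  wt := fun x y =>
    if 0 < P.margin x y ∧ x ∈ P.cands ∧ y ∈ P.cands then P.margin x y else 0
  wt_pos := by
    intro x y h
    show 0 < if 0 < P.margin x y ∧ x ∈ P.cands ∧ y ∈ P.cands then P.margin x y else 0
    rw [if_pos h]
    exact h.1
  wt_eq_zero := by
    intro x y h
    show (if 0 < P.margin x y ∧ x ∈ P.cands ∧ y ∈ P.cands then P.margin x y else 0) = 0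
    exact if_neg h

end GAProfile

/-- The number `ψ_Y = 2 (|Y| − 2)!`. -/
def psi {C : Type} (Y : Finset C) : ℤ := 2 * ((Y.card - 2).factorial : ℤ)

theorem psi_pos {C : Type} (Y : Finset C) : 0 < psi Y := by
  have h := Nat.factorial_pos (Y.card - 2)
  simp only [psi]
  omega

/-- The count function of the profile `𝐋_Y` consisting of one copy of each linear
order of `Y`. -/
def allOrdersCount {C : Type} (Y : Finset C) (L : C → C → Prop) : ℤ :=
  if IsStrictLinearOrderOn Y L then 1 else 0

/-- `L` ranks `a` first and `b` second among the candidates in `Y`. -/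
def firstSecond {C : Type} (Y : Finset C) (a b : C) (L : C → C → Prop) : Prop :=
  (∀ z ∈ Y, z ≠ a → L a z) ∧ ∀ z ∈ Y, z ≠ a → z ≠ b → L b z

/-- The count function of the `ab`-`Y`-block `𝐋_{ab-Y}`: one copy of each linear
order of `Y` with `a` first and `b` second. -/
def blockCount {C : Type} (Y : Finset C) (a b : C) (L : C → C → Prop) : ℤ :=
  if IsStrictLinearOrderOn Y L ∧ firstSecond Y a b L then 1 else 0

/-- The count function of the profile
`𝔏_Y(T) = 𝐋_Y + Σ_{a→b in T} (𝐋_{ab-Y} − 𝐋_{ba-Y})`. -/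
def bigLCount {C : Type} (Y : Finset C) (T : WeakTournament C) : (C → C → Prop) → ℤ :=
  fun L => allOrdersCount Y L +
    ∑ p ∈ T.verts ×ˢ T.verts,
      (if T.edge p.1 p.2 then blockCount Y p.1 p.2 L - blockCount Y p.2 p.1 L else 0)

/-- The profile `𝔏_Y(T)`. -/
def bigL {C : Type} (Y : Finset C) (T : WeakTournament C) (hsub : T.verts ⊆ Y) :
    GAProfile C where
  cands := Y
  cands_nonempty := by
    obtain ⟨x, hx⟩ := T.verts_nonempty
    exact ⟨x, hsub hx⟩
  count := bigLCount Y T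
  count_supp := by
    intro L hL
    by_contra h
    apply hL
    have hb : ∀ a b : C, blockCount Y a b L = 0 := by
      intro a b
      exact if_neg (by exact fun hc => h hc.1)
    simp only [bigLCount, allOrdersCount, if_neg h, zero_add]
    refine Finset.sum_eq_zero fun p _ => ?_
    rw [hb, hb, sub_self]
    split <;> rfl

/-- The profile representation `𝔓_Y(T) = 𝔏_Y(T)|_{X(T)}` of a weak tournament `T`
relative to `Y`. -/
def profileRep {C : Type} (Y : Finset C) (T : WeakTournament C) (hsub : T.verts ⊆ Y) :
    GAProfile C :=
  (bigL Y T hsub).restrict T.verts T.verts_nonempty hsub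

/-- The count function of the profile
`𝔏_{Y,m}(𝒯) = m𝐋_Y + Σ_{a→b in 𝒯 with weight kψ_Y} (k𝐋_{ab-Y} − k𝐋_{ba-Y})`. -/
def bigLWCount {C : Type} (Y : Finset C) (m : ℕ) (T : WeightedWeakTournament C) :
    (C → C → Prop) → ℤ :=
  fun L => (m : ℤ) * allOrdersCount Y L +
    ∑ p ∈ T.verts ×ˢ T.verts,
      (if T.edge p.1 p.2 then
        (T.wt p.1 p.2 / psi Y) * (blockCount Y p.1 p.2 L - blockCount Y p.2 p.1 L)
      else 0)

/-- The profile `𝔏_{Y,m}(𝒯)`. -/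
def bigLW {C : Type} (Y : Finset C) (m : ℕ) (T : WeightedWeakTournament C)
    (hsub : T.verts ⊆ Y) : GAProfile C where
  cands := Y
  cands_nonempty := by
    obtain ⟨x, hx⟩ := T.verts_nonempty
    exact ⟨x, hsub hx⟩
  count := bigLWCount Y m T
  count_supp := by
    intro L hL
    by_contra h
    apply hL
    have hb : ∀ a b : C, blockCount Y a b L = 0 := by
      intro a b
      exact if_neg (by exact fun hc => h hc.1)
    simp only [bigLWCount, allOrdersCount, if_neg h, mul_zero, zero_add]
    refine Finset.sum_eq_zero fun p _ => ?_
    rw [hb, hb, sub_self, mul_zero]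
    split <;> rfl

/-- The profile representation `𝔓_{Y,m}(𝒯) = 𝔏_{Y,m}(𝒯)|_{X(𝒯)}` of a weighted weak
tournament `𝒯` relative to `Y` and `m`. -/
def profileRepW {C : Type} (Y : Finset C) (m : ℕ) (T : WeightedWeakTournament C)
    (hsub : T.verts ⊆ Y) : GAProfile C :=
  (bigLW Y m T hsub).restrict T.verts T.verts_nonempty hsub

/-- Membership in `𝕎𝕋^w_{Y,m}`: a weighted weak tournament on vertices included in
`Y`, each of whose weights is `kψ_Y` for some positive `k ≤ m`. -/
def MemWTw {C : Type} (Y : Finset C) (m : ℕ) (T : WeightedWeakTournament C) : Prop :=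
  T.verts ⊆ Y ∧
    ∀ a b, T.edge a b → ∃ k : ℕ, 0 < k ∧ k ≤ m ∧ T.wt a b = (k : ℤ) * psi Y


/-! Margins are additive in the ballot counts, and restricting a profile to a subset of its
candidates does not change the margins between candidates of that subset. Transposing two
candidates `x, y` permutes the ballots of `𝐋_Y`, and also those of `𝐋_{ab-Y}` when
`x, y ∉ {a, b}`, so such margins vanish. In each of the `(|Y| - 2)!` ballots of `𝐋_{ab-Y}`, `a`
beats everyone and `b` everyone but `a`; hence `𝐋_{ab-Y} - 𝐋_{ba-Y}` has margin
`2 (|Y| - 2)! = ψ_Y` from `a` to `b` and margin `0` on every pair other than `{a, b}`. Summing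
with the coefficients `k = w(a, b) / ψ_Y` gives `μ_{x,y} = w(x, y) - w(y, x)`, whose positive
part is `𝒯`. -/

open Finset

open scoped Nat

namespace IsStrictLinearOrderOn

variable {C : Type} {s : Finset C} {L : C → C → Prop}

theorem asymm (h : IsStrictLinearOrderOn s L) {x y : C} (hxy : L x y) : ¬ L y x :=
  fun hyx => h.1 x (h.2.1 x y x hxy hyx)

theorem setOf_finite (s : Finset C) : {L | IsStrictLinearOrderOn s L}.Finite := by
  refine ((s ×ˢ s).powerset.finite_toSet.image fun S x y => (x, y) ∈ S).subset ?_
  intro L hL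
  refine ⟨(s ×ˢ s).filter fun p => L p.1 p.2, mem_powerset.2 (filter_subset _ _), ?_⟩
  funext x y
  simpa using fun hxy => hL.2.2.2 x y hxy

end IsStrictLinearOrderOn

section LinearOrdersOn

variable {C : Type} {s : Finset C} {a b : C} {L : C → C → Prop}

def linearOrdersOn (s : Finset C) : Finset (C → C → Prop) :=
  (IsStrictLinearOrderOn.setOf_finite s).toFinset

@[simp]
theorem mem_linearOrdersOn : L ∈ linearOrdersOn s ↔ IsStrictLinearOrderOn s L :=
  Set.Finite.mem_toFinset _

def RanksFirst (s : Finset C) (a : C) (L : C → C → Prop) : Prop :=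
  ∀ z ∈ s, z ≠ a → L a z

theorem firstSecond_iff :
    firstSecond s a b L ↔ RanksFirst s a L ∧ RanksFirst (s.erase a) b L := by
  simp only [firstSecond, RanksFirst, mem_erase]
  exact and_congr_right fun _ => ⟨fun h z hz hzb => h z hz.2 hz.1 hzb,
    fun h z hz hza hzb => h z ⟨hza, hz⟩ hzb⟩

theorem ranksFirst_restrictRel (hb : b ∈ s) :
    RanksFirst s b (restrictRel s L) ↔ RanksFirst s b L :=
  forall₂_congr fun _ hz => imp_congr_right fun _ => and_iff_left ⟨hb, hz⟩

theorem IsStrictLinearOrderOn.exists_ranksFirst {t : Finset C}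
    (h : IsStrictLinearOrderOn s L) (hts : t ⊆ s) (ht : t.Nonempty) :
    ∃ a ∈ t, RanksFirst t a L := by
  induction ht using Finset.Nonempty.cons_induction with
  | singleton a => exact ⟨a, mem_singleton_self a, fun _ hz hza => absurd (mem_singleton.1 hz) hza⟩
  | cons a t hat _ ih =>
    obtain ⟨b, hb, hbfirst⟩ := ih ((subset_cons hat).trans hts)
    have hab : a ≠ b := fun hab => hat (hab ▸ hb)
    rcases h.2.2.1 a (hts (mem_cons_self a t)) b (hts (subset_cons hat hb)) hab with hab' | hba
    · refine ⟨a, mem_cons_self a t, fun z hz hza => ?_⟩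
      have hzt := (mem_cons.1 hz).resolve_left hza
      rcases eq_or_ne z b with rfl | hzb
      · exact hab'
      · exact h.2.1 _ _ _ hab' (hbfirst z hzt hzb)
    · refine ⟨b, subset_cons hat hb, fun z hz hzb => ?_⟩
      rcases mem_cons.1 hz with rfl | hz
      · exact hba
      · exact hbfirst z hz hzb

def addTop (t : Finset C) (a : C) (L : C → C → Prop) : C → C → Prop :=
  fun x y => L x y ∨ x = a ∧ y ∈ t

theorem IsStrictLinearOrderOn.addTop {t : Finset C} (ha : a ∉ t)
    (h : IsStrictLinearOrderOn t L) : IsStrictLinearOrderOn (insert a t) (addTop t a L) := by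
  obtain ⟨hirr, htr, htot, hdom⟩ := h
  refine ⟨?_, ?_, ?_, ?_⟩
  · rintro x (hx | ⟨rfl, hx⟩)
    · exact hirr x hx
    · exact ha hx
  · rintro x y z (hxy | ⟨rfl, hy⟩) (hyz | ⟨rfl, hz⟩)
    · exact Or.inl (htr _ _ _ hxy hyz)
    · exact absurd (hdom _ _ hxy).2 ha
    · exact Or.inr ⟨rfl, (hdom _ _ hyz).2⟩
    · exact absurd hy ha
  · intro x hx y hy hne
    rcases mem_insert.1 hx with rfl | hxt <;> rcases mem_insert.1 hy with rfl | hyt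
    · exact absurd rfl hne
    · exact Or.inl (Or.inr ⟨rfl, hyt⟩)
    · exact Or.inr (Or.inr ⟨rfl, hxt⟩)
    · exact (htot x hxt y hyt hne).imp Or.inl Or.inl
  · rintro x y (hxy | ⟨rfl, hy⟩)
    · exact ⟨mem_insert_of_mem (hdom _ _ hxy).1, mem_insert_of_mem (hdom _ _ hxy).2⟩
    · exact ⟨mem_insert_self _ _, mem_insert_of_mem hy⟩

theorem restrictRel_addTop {t : Finset C} (ha : a ∉ t) (h : IsStrictLinearOrderOn t L) :
    restrictRel t (addTop t a L) = L := by
  funext x y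
  refine propext ⟨?_, fun hxy => ⟨Or.inl hxy, h.2.2.2 x y hxy⟩⟩
  rintro ⟨hxy | ⟨rfl, _⟩, hx, _⟩
  · exact hxy
  · exact absurd hx ha

theorem addTop_restrictRel {t : Finset C} (ha : a ∉ t)
    (h : IsStrictLinearOrderOn (insert a t) L) (hfirst : RanksFirst (insert a t) a L) :
    addTop t a (restrictRel t L) = L := by
  funext x y
  refine propext ⟨?_, fun hxy => ?_⟩
  · rintro (⟨hxy, _⟩ | ⟨rfl, hy⟩)
    · exact hxy
    · exact hfirst y (mem_insert_of_mem hy) (ne_of_mem_of_not_mem hy ha)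
  obtain ⟨hx, hy⟩ := h.2.2.2 x y hxy
  rcases mem_insert.1 hx with rfl | hxt <;> rcases mem_insert.1 hy with rfl | hyt
  · exact absurd hxy (h.1 _)
  · exact Or.inr ⟨rfl, hyt⟩
  · exact absurd hxy (h.asymm (hfirst x hx (ne_of_mem_of_not_mem hxt ha)))
  · exact Or.inl ⟨hxy, hxt, hyt⟩

theorem card_filter_ranksFirst (ha : a ∈ s) (q : (C → C → Prop) → Prop) :
    #((linearOrdersOn s).filter fun L => RanksFirst s a L ∧ q (restrictRel (s.erase a) L)) =
      #((linearOrdersOn (s.erase a)).filter q) := by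
  obtain ⟨t, hat, rfl⟩ : ∃ t, a ∉ t ∧ s = insert a t :=
    ⟨s.erase a, notMem_erase a s, (insert_erase ha).symm⟩
  rw [erase_insert hat]
  refine card_nbij' (restrictRel t) (addTop t a) ?_ ?_ ?_ ?_
  · intro L hL
    simp only [mem_coe, mem_filter, mem_linearOrdersOn] at hL ⊢
    exact ⟨hL.1.restrict (subset_insert a t), hL.2.2⟩
  · intro L hL
    simp only [mem_coe, mem_filter, mem_linearOrdersOn] at hL ⊢
    refine ⟨hL.1.addTop hat, fun z hz hza => Or.inr ⟨rfl, ?_⟩, ?_⟩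
    · exact (mem_insert.1 hz).resolve_left hza
    · rw [restrictRel_addTop hat hL.1]
      exact hL.2
  · intro L hL
    simp only [mem_coe, mem_filter, mem_linearOrdersOn] at hL
    exact addTop_restrictRel hat hL.1 hL.2.1
  · intro L hL
    simp only [mem_coe, mem_filter, mem_linearOrdersOn] at hL
    exact restrictRel_addTop hat hL.1

theorem card_filter_ranksFirst_eq_card (ha : a ∈ s) :
    #((linearOrdersOn s).filter (RanksFirst s a)) = #(linearOrdersOn (s.erase a)) := by
  simpa using card_filter_ranksFirst ha fun _ => True

theorem card_linearOrdersOn (s : Finset C) : #(linearOrdersOn s) = s.card ! := by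
  induction s using Finset.strongInduction with
  | H s ih =>
  rcases s.eq_empty_or_nonempty with rfl | hs
  · refine card_eq_one.2 ⟨fun _ _ => False, eq_singleton_iff_unique_mem.2 ⟨?_, fun L hL => ?_⟩⟩
    · simp [IsStrictLinearOrderOn]
    · funext x y
      exact propext ⟨fun hxy => by simpa using ((mem_linearOrdersOn.1 hL).2.2.2 x y hxy).1,
        False.elim⟩
  have hcover :
      linearOrdersOn s = s.biUnion fun a => (linearOrdersOn s).filter (RanksFirst s a) := by
    ext L
    simp only [mem_biUnion, mem_filter]
    refine ⟨fun hL => ?_, fun ⟨_, _, hL, _⟩ => hL⟩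
    obtain ⟨a, ha, hfirst⟩ := (mem_linearOrdersOn.1 hL).exists_ranksFirst subset_rfl hs
    exact ⟨a, ha, hL, hfirst⟩
  have hdisj :
      (s : Set C).PairwiseDisjoint fun a => (linearOrdersOn s).filter (RanksFirst s a) := by
    intro a ha b hb hab
    refine disjoint_left.2 fun L hLa hLb => ?_
    rw [mem_filter, mem_linearOrdersOn] at hLa hLb
    exact hLa.1.asymm (hLa.2 b hb hab.symm) (hLb.2 a ha hab)
  have hfiber : ∀ a ∈ s, #((linearOrdersOn s).filter (RanksFirst s a)) = (s.card - 1)! := by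
    intro a ha
    rw [card_filter_ranksFirst_eq_card ha, ih _ (erase_ssubset ha), card_erase_of_mem ha]
  rw [hcover, card_biUnion hdisj, sum_congr rfl hfiber, sum_const, smul_eq_mul,
    Nat.mul_factorial_pred hs.card_pos.ne']

theorem card_filter_firstSecond (ha : a ∈ s) (hb : b ∈ s) (hab : a ≠ b) :
    #((linearOrdersOn s).filter (firstSecond s a b)) = (s.card - 2)! := by
  have hb' : b ∈ s.erase a := mem_erase.2 ⟨hab.symm, hb⟩
  have hfilter : (linearOrdersOn s).filter (firstSecond s a b) = (linearOrdersOn s).filter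
      fun L => RanksFirst s a L ∧ RanksFirst (s.erase a) b (restrictRel (s.erase a) L) := by
    simp only [firstSecond_iff, ranksFirst_restrictRel hb']
  rw [hfilter, card_filter_ranksFirst ha, card_filter_ranksFirst_eq_card hb', card_linearOrdersOn,
    card_erase_of_mem hb', card_erase_of_mem ha, Nat.sub_sub]

end LinearOrdersOn

section Margins

variable {C : Type} {s : Finset C} {x y : C} {L : C → C → Prop}

def ballotSign (L : C → C → Prop) (x y : C) : ℤ :=
  (if L x y then 1 else 0) - if L y x then 1 else 0

theorem ballotSign_comm : ballotSign L y x = -ballotSign L x y :=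
  (neg_sub _ _).symm

theorem ballotSign_restrictRel (hx : x ∈ s) (hy : y ∈ s) :
    ballotSign (restrictRel s L) x y = ballotSign L x y := by
  simp [ballotSign, restrictRel, hx, hy]

theorem IsStrictLinearOrderOn.ballotSign_eq_one (h : IsStrictLinearOrderOn s L) (hxy : L x y) :
    ballotSign L x y = 1 := by
  simp [ballotSign, hxy, h.asymm hxy]

def marginHom (s : Finset C) (x y : C) : ((C → C → Prop) → ℤ) →+ ℤ where
  toFun f := ∑ L ∈ linearOrdersOn s, ballotSign L x y * f L
  map_zero' := by simp
  map_add' f g := by simp [mul_add, sum_add_distrib]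

theorem marginHom_apply (f : (C → C → Prop) → ℤ) :
    marginHom s x y f = ∑ L ∈ linearOrdersOn s, ballotSign L x y * f L := rfl

theorem marginHom_comm (f : (C → C → Prop) → ℤ) : marginHom s y x f = -marginHom s x y f := by
  simp [marginHom_apply, ballotSign_comm (x := x), ← sum_neg_distrib]

namespace GAProfile

theorem finsum_eq_sum_linearOrdersOn (P : GAProfile C) {g : (C → C → Prop) → ℤ}
    (hg : ∀ L, P.count L = 0 → g L = 0) : ∑ᶠ L, g L = ∑ L ∈ linearOrdersOn P.cands, g L :=
  finsum_eq_sum_of_support_subset g fun L hL => by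
    simpa using P.count_supp L (mt (hg L) hL)

theorem margin_eq_marginHom (P : GAProfile C) (x y : C) :
    P.margin x y = marginHom P.cands x y P.count := by
  rw [margin, P.finsum_eq_sum_linearOrdersOn (by intro L h; simp [h]),
    P.finsum_eq_sum_linearOrdersOn (by intro L h; simp [h]), ← sum_sub_distrib]
  refine sum_congr rfl fun L _ => ?_
  simp only [ballotSign]
  split_ifs <;> ring

theorem margin_self (P : GAProfile C) (x : C) : P.margin x x = 0 :=
  sub_self _

theorem restrict_count_eq_sum (P : GAProfile C) {Z : Finset C} (hZ : Z.Nonempty)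
    (hsub : Z ⊆ P.cands) (L : C → C → Prop) :
    (P.restrict Z hZ hsub).count L =
      ∑ L' ∈ (linearOrdersOn P.cands).filter (restrictRel Z · = L), P.count L' := by
  rw [sum_filter]
  exact P.finsum_eq_sum_linearOrdersOn fun L' h => by simp [h]

theorem margin_restrict (P : GAProfile C) {Z : Finset C} (hZ : Z.Nonempty)
    (hsub : Z ⊆ P.cands) (hx : x ∈ Z) (hy : y ∈ Z) :
    (P.restrict Z hZ hsub).margin x y = P.margin x y := by
  rw [margin_eq_marginHom, margin_eq_marginHom]
  have hmaps : ∀ L ∈ linearOrdersOn P.cands, restrictRel Z L ∈ linearOrdersOn Z := fun L hL =>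
    mem_linearOrdersOn.2 ((mem_linearOrdersOn.1 hL).restrict hsub)
  calc ∑ L ∈ linearOrdersOn Z, ballotSign L x y * (P.restrict Z hZ hsub).count L
      = ∑ L ∈ linearOrdersOn Z, ∑ L' ∈ (linearOrdersOn P.cands).filter (restrictRel Z · = L),
          ballotSign (restrictRel Z L') x y * P.count L' := by
        refine sum_congr rfl fun L _ => ?_
        rw [restrict_count_eq_sum, mul_sum]
        exact sum_congr rfl fun L' hL' => by rw [(mem_filter.1 hL').2]
    _ = ∑ L' ∈ linearOrdersOn P.cands, ballotSign L' x y * P.count L' := by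
        rw [sum_fiberwise_of_maps_to hmaps]
        simp only [ballotSign_restrictRel hx hy]

end GAProfile

end Margins

section Blocks

variable {C : Type} {s Y : Finset C} {a b x y : C} {L : C → C → Prop}

theorem swap_apply_mem_iff (hx : x ∈ s) (hy : y ∈ s) {z : C} :
    Equiv.swap x y z ∈ s ↔ z ∈ s := by
  rw [Equiv.swap_apply_def]
  split_ifs with hzx hzy
  · exact ⟨fun _ => hzx ▸ hx, fun _ => hy⟩
  · exact ⟨fun _ => hzy ▸ hy, fun _ => hx⟩
  · exact Iff.rfl

theorem swapRel_mem_linearOrdersOn (hx : x ∈ s) (hy : y ∈ s) (hL : L ∈ linearOrdersOn s) :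
    swapRel x y L ∈ linearOrdersOn s := by
  have himage : s.image (Equiv.swap x y) = s := by
    ext z
    simp only [mem_image]
    refine ⟨fun ⟨w, hw, hwz⟩ => hwz ▸ (swap_apply_mem_iff hx hy).2 hw,
      fun hz => ⟨Equiv.swap x y z, (swap_apply_mem_iff hx hy).2 hz, Equiv.swap_apply_self _ _ _⟩⟩
  simpa [himage] using (mem_linearOrdersOn.1 hL).swapRel_mem x y

theorem swapRel_swapRel : swapRel x y (swapRel x y L) = L := by
  funext u v
  simp [swapRel]

theorem marginHom_eq_zero_of_swapRel_invariant (hx : x ∈ s) (hy : y ∈ s)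
    {f : (C → C → Prop) → ℤ} (hf : ∀ L ∈ linearOrdersOn s, f (swapRel x y L) = f L) :
    marginHom s x y f = 0 := by
  have hneg : marginHom s x y f = ∑ L ∈ linearOrdersOn s, -(ballotSign L x y * f L) := by
    refine sum_nbij' (swapRel x y) (swapRel x y) (fun L hL => swapRel_mem_linearOrdersOn hx hy hL)
      (fun L hL => swapRel_mem_linearOrdersOn hx hy hL) (fun _ _ => swapRel_swapRel)
      (fun _ _ => swapRel_swapRel) fun L hL => ?_
    have hsign : ballotSign (swapRel x y L) x y = ballotSign L y x := by
      simp [ballotSign, swapRel]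
    rw [hf L hL, hsign, ballotSign_comm (x := x) (y := y), neg_mul, neg_neg]
  rw [sum_neg_distrib, ← marginHom_apply] at hneg
  omega

theorem marginHom_allOrdersCount (hx : x ∈ Y) (hy : y ∈ Y) :
    marginHom Y x y (allOrdersCount Y) = 0 :=
  marginHom_eq_zero_of_swapRel_invariant hx hy fun L hL => by
    simp only [allOrdersCount, mem_linearOrdersOn.1 hL,
      mem_linearOrdersOn.1 (swapRel_mem_linearOrdersOn hx hy hL), if_true]

theorem firstSecond_swapRel (hx : x ∈ Y) (hy : y ∈ Y) :
    firstSecond Y a b (swapRel x y L) ↔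
      firstSecond Y (Equiv.swap x y a) (Equiv.swap x y b) L := by
  simp only [firstSecond, swapRel]
  refine and_congr ?_ ?_ <;>
  · rw [← (Equiv.swap x y).forall_congr_right]
    simp [swap_apply_mem_iff hx hy, Equiv.swap_apply_eq_iff]

theorem marginHom_blockCount_of_forall
    (h : ∀ L, IsStrictLinearOrderOn Y L → firstSecond Y a b L → L x y) :
    marginHom Y x y (blockCount Y a b) = #((linearOrdersOn Y).filter (firstSecond Y a b)) := by
  rw [marginHom_apply, card_eq_sum_ones, Nat.cast_sum, sum_filter]
  refine sum_congr rfl fun L hL => ?_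
  rw [mem_linearOrdersOn] at hL
  by_cases hfs : firstSecond Y a b L
  · simp [blockCount, hL, hfs, hL.ballotSign_eq_one (h L hL hfs)]
  · simp [blockCount, hfs]

theorem marginHom_blockCount (ha : a ∈ Y) (hb : b ∈ Y) (hab : a ≠ b) (hx : x ∈ Y) (hy : y ∈ Y)
    (hxy : x ≠ y) :
    marginHom Y x y (blockCount Y a b) =
      if x = a ∨ x = b ∧ y ≠ a then ((Y.card - 2)! : ℤ)
      else if y = a ∨ y = b then -((Y.card - 2)! : ℤ) else 0 := by
  have above : ∀ {u v}, (∀ L, IsStrictLinearOrderOn Y L → firstSecond Y a b L → L u v) →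
      marginHom Y u v (blockCount Y a b) = ((Y.card - 2)! : ℤ) := fun h => by
    rw [marginHom_blockCount_of_forall h, card_filter_firstSecond ha hb hab]
  have below : ∀ {u v}, (∀ L, IsStrictLinearOrderOn Y L → firstSecond Y a b L → L v u) →
      marginHom Y u v (blockCount Y a b) = -((Y.card - 2)! : ℤ) := fun h => by
    rw [marginHom_comm, above h]
  split_ifs with hxab hyab
  · rcases hxab with rfl | ⟨rfl, hya⟩
    · exact above fun L _ hL => hL.1 y hy hxy.symm
    · exact above fun L _ hL => hL.2 y hy hya hxy.symm
  · push Not at hxab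
    rcases hyab with rfl | rfl
    · exact below fun L _ hL => hL.1 x hx hxy
    · exact below fun L _ hL => hL.2 x hx hxab.1 hxy
  · push Not at hxab hyab
    refine marginHom_eq_zero_of_swapRel_invariant hx hy fun L hL => ?_
    have hxb : x ≠ b := fun h => hyab.1 (hxab.2 h)
    simp only [blockCount, firstSecond_swapRel hx hy,
      Equiv.swap_apply_of_ne_of_ne (Ne.symm hxab.1) (Ne.symm hyab.1),
      Equiv.swap_apply_of_ne_of_ne (Ne.symm hxb) (Ne.symm hyab.2), mem_linearOrdersOn.1 hL,
      mem_linearOrdersOn.1 (swapRel_mem_linearOrdersOn hx hy hL)]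

theorem marginHom_blockCount_sub_blockCount (ha : a ∈ Y) (hb : b ∈ Y) (hab : a ≠ b)
    (hx : x ∈ Y) (hy : y ∈ Y) (hxy : x ≠ y) :
    marginHom Y x y (blockCount Y a b - blockCount Y b a) =
      psi Y * ((if (a, b) = (x, y) then 1 else 0) - if (a, b) = (y, x) then 1 else 0) := by
  rw [map_sub, marginHom_blockCount ha hb hab hx hy hxy,
    marginHom_blockCount hb ha hab.symm hx hy hxy, psi]
  split_ifs <;> simp only [Prod.mk.injEq] at * <;> grind

end Blocks

namespace WeightedWeakTournament

variable {C : Type} (T : WeightedWeakTournament C) {x y : C}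

theorem ext {T' : WeightedWeakTournament C} (hverts : T.verts = T'.verts)
    (hedge : ∀ x y, T.edge x y ↔ T'.edge x y) (hwt : ∀ x y, T.wt x y = T'.wt x y) : T = T' := by
  obtain ⟨V, _, E, _, _, w, _, _⟩ := T
  obtain ⟨V', _, E', _, _, w', _, _⟩ := T'
  obtain rfl : V = V' := hverts
  obtain rfl : E = E' := funext₂ fun x y => propext (hedge x y)
  obtain rfl : w = w' := funext₂ hwt
  rfl

theorem wt_nonneg (x y : C) : 0 ≤ T.wt x y := by
  by_cases h : T.edge x y
  · exact (T.wt_pos x y h).le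
  · exact (T.wt_eq_zero x y h).ge

theorem wt_sub_wt_of_edge (h : T.edge x y) : T.wt x y - T.wt y x = T.wt x y := by
  rw [T.wt_eq_zero y x (T.edge_asymm x y h), sub_zero]

theorem wt_sub_wt_pos_iff : 0 < T.wt x y - T.wt y x ↔ T.edge x y := by
  refine ⟨fun hpos => ?_, fun h => by rw [T.wt_sub_wt_of_edge h]; exact T.wt_pos x y h⟩
  by_contra h
  rw [T.wt_eq_zero x y h] at hpos
  linarith [T.wt_nonneg y x]

end WeightedWeakTournament

theorem GAProfile.marg_eq_of_margin {C : Type} (P : GAProfile C) (T : WeightedWeakTournament C)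
    (hcands : P.cands = T.verts)
    (hmargin : ∀ x ∈ T.verts, ∀ y ∈ T.verts, P.margin x y = T.wt x y - T.wt y x) :
    P.marg = T := by
  have hedge : ∀ x y, (0 < P.margin x y ∧ x ∈ P.cands ∧ y ∈ P.cands) ↔ T.edge x y := by
    intro x y
    rw [hcands]
    refine ⟨fun ⟨hpos, hx, hy⟩ => ?_, fun h => ?_⟩
    · rwa [hmargin x hx y hy, T.wt_sub_wt_pos_iff] at hpos
    · obtain ⟨hx, hy⟩ := T.edge_dom x y h
      exact ⟨by rwa [hmargin x hx y hy, T.wt_sub_wt_pos_iff], hx, hy⟩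
  refine WeightedWeakTournament.ext _ hcands hedge fun x y => ?_
  show (if 0 < P.margin x y ∧ x ∈ P.cands ∧ y ∈ P.cands then P.margin x y else 0) = T.wt x y
  split_ifs with h
  · obtain ⟨hx, hy⟩ := T.edge_dom x y ((hedge x y).1 h)
    rw [hmargin x hx y hy, T.wt_sub_wt_of_edge ((hedge x y).1 h)]
  · exact (T.wt_eq_zero x y (mt (hedge x y).2 h)).symm

section ProfileRepresentation

variable {C : Type} {Y : Finset C} {m : ℕ} {T : WeightedWeakTournament C}

theorem MemWTw.psi_dvd_wt (hT : MemWTw Y m T) (a b : C) : psi Y ∣ T.wt a b := by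
  by_cases h : T.edge a b
  · obtain ⟨k, _, _, hk⟩ := hT.2 a b h
    exact ⟨k, by rw [hk, mul_comm]⟩
  · rw [T.wt_eq_zero a b h]
    exact dvd_zero _

theorem bigLWCount_eq (Y : Finset C) (m : ℕ) (T : WeightedWeakTournament C) :
    bigLWCount Y m T = (m : ℤ) • allOrdersCount Y + ∑ p ∈ T.verts ×ˢ T.verts,
      if T.edge p.1 p.2 then
        (T.wt p.1 p.2 / psi Y) • (blockCount Y p.1 p.2 - blockCount Y p.2 p.1) else 0 := by
  funext L
  simp only [bigLWCount, Pi.add_apply, Pi.smul_apply, Finset.sum_apply, smul_eq_mul]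
  refine congrArg _ (sum_congr rfl fun p _ => ?_)
  split_ifs <;> rfl

theorem margin_bigLW (hsub : T.verts ⊆ Y) (hdvd : ∀ a b, psi Y ∣ T.wt a b) {x y : C}
    (hx : x ∈ T.verts) (hy : y ∈ T.verts) :
    (bigLW Y m T hsub).margin x y = T.wt x y - T.wt y x := by
  rcases eq_or_ne x y with rfl | hxy
  · rw [GAProfile.margin_self, sub_self]
  have hterm : ∀ p ∈ T.verts ×ˢ T.verts, marginHom Y x y (if T.edge p.1 p.2 then
      (T.wt p.1 p.2 / psi Y) • (blockCount Y p.1 p.2 - blockCount Y p.2 p.1) else 0) =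
      T.wt p.1 p.2 * ((if (p.1, p.2) = (x, y) then 1 else 0) -
        if (p.1, p.2) = (y, x) then 1 else 0) := by
    intro p _
    by_cases h : T.edge p.1 p.2
    · rw [if_pos h]
      obtain ⟨hp1, hp2⟩ := T.edge_dom _ _ h
      have hne : p.1 ≠ p.2 := fun he => T.edge_asymm _ _ h (he ▸ h)
      rw [map_zsmul, marginHom_blockCount_sub_blockCount (hsub hp1) (hsub hp2) hne (hsub hx)
        (hsub hy) hxy, smul_eq_mul, ← mul_assoc, Int.ediv_mul_cancel (hdvd _ _)]
    · rw [if_neg h, map_zero, T.wt_eq_zero _ _ h, zero_mul]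
  rw [GAProfile.margin_eq_marginHom]
  show marginHom Y x y (bigLWCount Y m T) = _
  rw [bigLWCount_eq, map_add, map_zsmul, marginHom_allOrdersCount (hsub hx) (hsub hy), smul_zero,
    zero_add, map_sum, sum_congr rfl hterm]
  simp [mul_sub, sum_sub_distrib, hx, hy]

end ProfileRepresentation

theorem marg_profileRepW_general (C : Type) (Y : Finset C) (m : ℕ)
    (T : WeightedWeakTournament C) (hT : MemWTw Y m T) (hsub : T.verts ⊆ Y) :
    (profileRepW Y m T hsub).marg = T :=
  GAProfile.marg_eq_of_margin _ T rfl fun _ hx _ hy =>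
    (GAProfile.margin_restrict _ _ _ hx hy).trans (margin_bigLW hsub hT.psi_dvd_wt hx hy)

/-- For any finite set `Y` of candidates, any `m ∈ ℤ⁺`, and any
weighted weak tournament `𝒯 ∈ 𝕎𝕋^w_{Y,m}`, the margin graph of the profile
representation of `𝒯` relative to `Y` and `m` equals `𝒯`: `ℳ(𝔓_{Y,m}(𝒯)) = 𝒯`. -/
theorem marg_profileRepW (C : Type) [Infinite C] (Y : Finset C) (m : ℕ) (hm : 0 < m)
    (T : WeightedWeakTournament C) (hT : MemWTw Y m T) (hsub : T.verts ⊆ Y) :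
    (profileRepW Y m T hsub).marg = T :=
  marg_profileRepW_general C Y m T hT hsub
end
end

section
/- The profile representation commutes with restriction: for any finite Y ⊆ 𝒳, weak tournament T with X(T) ⊆ Y, m ∈ ℤ⁺, and weighted weak tournament 𝒯 ∈ 𝕎𝕋^w_{Y,m}: (1) if ∅ ≠ Z ⊆ X(T), then 𝔓_Y(T|_Z) = 𝔓_Y(T)|_Z; (2) if ∅ ≠ Z ⊆ X(𝒯), then 𝔓_{Y,m}(𝒯|_Z) = 𝔓_{Y,m}(𝒯)|_Z. -/
/- Formalization of the profile representation of (weighted) weak tournaments from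
Holliday, Norman, Pacuit, Zahedian, "Impossibility theorems involving weakenings of
expansion consistency and resoluteness in voting". Candidates form an infinite
type `C`. -/

open Classical

noncomputable section

/-- The restriction `T|_Z` of a weak tournament to a nonempty subset of its vertices. -/
def WeakTournament.restrict {C : Type} (T : WeakTournament C) (Z : Finset C)
    (hZ : Z.Nonempty) (hsub : Z ⊆ T.verts) : WeakTournament C where
  verts := Z
  verts_nonempty := hZ
  edge := fun x y => T.edge x y ∧ x ∈ Z ∧ y ∈ Z
  edge_asymm := fun x y h h' => T.edge_asymm x y h.1 h'.1
  edge_dom := fun x y h => ⟨h.2.1, h.2.2⟩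

/-- The restriction `𝒯|_Z` of a weighted weak tournament to a nonempty subset of its
vertices. -/
def WeightedWeakTournament.restrict {C : Type} (T : WeightedWeakTournament C)
    (Z : Finset C) (hZ : Z.Nonempty) (hsub : Z ⊆ T.verts) : WeightedWeakTournament C where
  verts := Z
  verts_nonempty := hZ
  edge := fun x y => T.edge x y ∧ x ∈ Z ∧ y ∈ Z
  edge_asymm := fun x y h h' => T.edge_asymm x y h.1 h'.1
  edge_dom := fun x y h => ⟨h.2.1, h.2.2⟩
  wt := fun x y => if x ∈ Z ∧ y ∈ Z then T.wt x y else 0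
  wt_pos := by
    intro x y h
    show 0 < if x ∈ Z ∧ y ∈ Z then T.wt x y else 0
    rw [if_pos ⟨h.2.1, h.2.2⟩]
    exact T.wt_pos x y h.1
  wt_eq_zero := by
    intro x y h
    show (if x ∈ Z ∧ y ∈ Z then T.wt x y else 0) = 0
    split_ifs with hm
    · exact T.wt_eq_zero x y fun he => h ⟨he, hm.1, hm.2⟩
    · rfl

/-- The weak tournament `T_{a⇄b}` obtained by transposing the vertices `a` and `b`. -/
def WeakTournament.swap {C : Type} (T : WeakTournament C) (a b : C) : WeakTournament C where
  verts := T.verts.image (Equiv.swap a b)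
  verts_nonempty := T.verts_nonempty.image _
  edge := fun x y => T.edge (Equiv.swap a b x) (Equiv.swap a b y)
  edge_asymm := fun x y h => T.edge_asymm _ _ h
  edge_dom := by
    intro x y h
    obtain ⟨h1, h2⟩ := T.edge_dom _ _ h
    exact ⟨Finset.mem_image.mpr ⟨_, h1, Equiv.swap_apply_self a b x⟩,
      Finset.mem_image.mpr ⟨_, h2, Equiv.swap_apply_self a b y⟩⟩

/-- The weighted weak tournament `𝒯_{a⇄b}` obtained by transposing the vertices `a`
and `b`, transporting the weights accordingly. -/
def WeightedWeakTournament.swap {C : Type} (T : WeightedWeakTournament C) (a b : C) :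
    WeightedWeakTournament C where
  verts := T.verts.image (Equiv.swap a b)
  verts_nonempty := T.verts_nonempty.image _
  edge := fun x y => T.edge (Equiv.swap a b x) (Equiv.swap a b y)
  edge_asymm := fun x y h => T.edge_asymm _ _ h
  edge_dom := by
    intro x y h
    obtain ⟨h1, h2⟩ := T.edge_dom _ _ h
    exact ⟨Finset.mem_image.mpr ⟨_, h1, Equiv.swap_apply_self a b x⟩,
      Finset.mem_image.mpr ⟨_, h2, Equiv.swap_apply_self a b y⟩⟩
  wt := fun x y => T.wt (Equiv.swap a b x) (Equiv.swap a b y)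
  wt_pos := fun x y h => T.wt_pos _ _ h
  wt_eq_zero := fun x y h => T.wt_eq_zero _ _ h

section RestrictionProof

variable {C : Type}

lemma slo_asymm {s : Finset C} {L : C → C → Prop} (h : IsStrictLinearOrderOn s L)
    {x y : C} (hxy : L x y) : ¬ L y x :=
  fun hyx => h.1 x (h.2.1 x y x hxy hyx)

lemma restrictRel_restrictRel {Z A : Finset C} (hZA : Z ⊆ A) (L : C → C → Prop) :
    restrictRel Z (restrictRel A L) = restrictRel Z L := by
  funext x y
  apply propext
  constructor
  · rintro ⟨⟨h, -, -⟩, hx, hy⟩; exact ⟨h, hx, hy⟩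
  · rintro ⟨h, hx, hy⟩; exact ⟨⟨h, hZA hx, hZA hy⟩, hx, hy⟩

lemma slo_finite (Y : Finset C) :
    {L : C → C → Prop | IsStrictLinearOrderOn Y L}.Finite := by
  have himg : ((fun L : C → C → Prop =>
      fun p : ({x // x ∈ Y} × {x // x ∈ Y}) => L p.1.1 p.2.1) ''
      {L | IsStrictLinearOrderOn Y L}).Finite := Set.toFinite _
  refine Set.Finite.of_finite_image himg ?_
  intro L1 h1 L2 h2 heq
  funext x y
  apply propext
  constructor
  · intro h
    obtain ⟨hx, hy⟩ := h1.2.2.2 x y h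
    have h' : L1 x y = L2 x y := congrFun heq (⟨x, hx⟩, ⟨y, hy⟩)
    exact h' ▸ h
  · intro h
    obtain ⟨hx, hy⟩ := h2.2.2.2 x y h
    have h' : L1 x y = L2 x y := congrFun heq (⟨x, hx⟩, ⟨y, hy⟩)
    exact h'.symm ▸ h

/-- The finite set of strict linear orders on `Y`, as a `Finset`. -/
def SLOFinset (Y : Finset C) : Finset (C → C → Prop) := (slo_finite Y).toFinset

lemma mem_SLOFinset {Y : Finset C} {L : C → C → Prop} :
    L ∈ SLOFinset Y ↔ IsStrictLinearOrderOn Y L := (slo_finite Y).mem_toFinset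

lemma finsum_eq_sum_SLO {Y : Finset C} (f : (C → C → Prop) → ℤ)
    (h : ∀ L, f L ≠ 0 → IsStrictLinearOrderOn Y L) :
    ∑ᶠ L, f L = ∑ L ∈ SLOFinset Y, f L :=
  finsum_eq_sum_of_support_subset f (fun L hL => mem_SLOFinset.mpr (h L hL))

lemma GAProfile.ext' {P Q : GAProfile C} (h1 : P.cands = Q.cands)
    (h2 : P.count = Q.count) : P = Q := by
  cases P; cases Q; simp_all

lemma GAProfile.restrict_count (P : GAProfile C) (Z : Finset C) (hZ : Z.Nonempty)
    (hsub : Z ⊆ P.cands) (L : C → C → Prop) :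
    (P.restrict Z hZ hsub).count L
      = ∑ᶠ L', if restrictRel Z L' = L then P.count L' else 0 := rfl

lemma GAProfile.restrict_restrict (P : GAProfile C) {A Z : Finset C} (hA : A.Nonempty)
    (hZ : Z.Nonempty) (hAP : A ⊆ P.cands) (hZA : Z ⊆ A) :
    (P.restrict A hA hAP).restrict Z hZ hZA = P.restrict Z hZ (hZA.trans hAP) := by
  refine GAProfile.ext' rfl ?_
  funext L
  show (∑ᶠ L'', if restrictRel Z L'' = L then (P.restrict A hA hAP).count L'' else 0)
      = ∑ᶠ L', if restrictRel Z L' = L then P.count L' else 0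
  set S := SLOFinset (C := C) P.cands with hS
  have hcount : ∀ L'' : C → C → Prop, (P.restrict A hA hAP).count L''
      = ∑ L' ∈ S, (if restrictRel A L' = L'' then P.count L' else 0) := by
    intro L''
    rw [GAProfile.restrict_count]
    apply finsum_eq_sum_SLO
    intro L' h
    by_cases hif : restrictRel A L' = L''
    · exact P.count_supp L' (by simpa [hif] using h)
    · simp [hif] at h
  have hbody : (fun L'' => if restrictRel Z L'' = L
        then (P.restrict A hA hAP).count L'' else 0)
      = fun L'' => ∑ L' ∈ S, (if restrictRel A L' = L''
        then (if restrictRel Z L'' = L then P.count L' else 0) else 0) := by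
    funext L''
    by_cases hc : restrictRel Z L'' = L
    · simp [hc, hcount]
    · simp [hc]
  calc (∑ᶠ L'', if restrictRel Z L'' = L then (P.restrict A hA hAP).count L'' else 0)
      = ∑ᶠ L'', ∑ L' ∈ S, (if restrictRel A L' = L''
          then (if restrictRel Z L'' = L then P.count L' else 0) else 0) := by
        rw [hbody]
    _ = ∑ L'' ∈ S.image (restrictRel A), ∑ L' ∈ S, (if restrictRel A L' = L''
          then (if restrictRel Z L'' = L then P.count L' else 0) else 0) := by
        apply finsum_eq_sum_of_support_subset
        intro L'' h
        have h' : (∑ L' ∈ S, (if restrictRel A L' = L''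
            then (if restrictRel Z L'' = L then P.count L' else 0) else 0)) ≠ 0 := h
        obtain ⟨L', hL', hne⟩ := Finset.exists_ne_zero_of_sum_ne_zero h'
        have heq : restrictRel A L' = L'' := by
          by_contra hcon; simp [hcon] at hne
        exact Finset.mem_coe.mpr (Finset.mem_image.mpr ⟨L', hL', heq⟩)
    _ = ∑ L' ∈ S, ∑ L'' ∈ S.image (restrictRel A), (if restrictRel A L' = L''
          then (if restrictRel Z L'' = L then P.count L' else 0) else 0) :=
        Finset.sum_comm
    _ = ∑ L' ∈ S, (if restrictRel Z L' = L then P.count L' else 0) := by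
        apply Finset.sum_congr rfl
        intro L' hL'
        rw [Finset.sum_ite_eq, if_pos (Finset.mem_image.mpr ⟨L', hL', rfl⟩),
          restrictRel_restrictRel hZA]
    _ = ∑ᶠ L', if restrictRel Z L' = L then P.count L' else 0 := by
        symm
        apply finsum_eq_sum_SLO
        intro L' h
        by_cases hif : restrictRel Z L' = L
        · exact P.count_supp L' (by simpa [hif] using h)
        · simp [hif] at h

lemma swap_mem_of_mem {Y : Finset C} {a b : C} (ha : a ∈ Y) (hb : b ∈ Y) {x : C}
    (hx : x ∈ Y) : Equiv.swap a b x ∈ Y := by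
  rcases eq_or_ne x a with rfl | hxa
  · rwa [Equiv.swap_apply_left]
  rcases eq_or_ne x b with rfl | hxb
  · rwa [Equiv.swap_apply_right]
  · rwa [Equiv.swap_apply_of_ne_of_ne hxa hxb]

lemma image_swap_self {Y : Finset C} {a b : C} (ha : a ∈ Y) (hb : b ∈ Y) :
    Y.image (Equiv.swap a b) = Y := by
  ext x
  constructor
  · intro hx
    obtain ⟨y, hy, rfl⟩ := Finset.mem_image.mp hx
    exact swap_mem_of_mem ha hb hy
  · intro hx
    exact Finset.mem_image.mpr ⟨Equiv.swap a b x, swap_mem_of_mem ha hb hx,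
      Equiv.swap_apply_self a b x⟩

lemma swapRel_swapRel_s15 (a b : C) (L : C → C → Prop) :
    swapRel a b (swapRel a b L) = L := by
  funext x y
  simp [swapRel, Equiv.swap_apply_self]

lemma swapRel_comm (a b : C) (L : C → C → Prop) : swapRel b a L = swapRel a b L := by
  funext x y
  simp [swapRel, Equiv.swap_comm]

lemma slo_swap_iff {Y : Finset C} {a b : C} (ha : a ∈ Y) (hb : b ∈ Y)
    (L : C → C → Prop) :
    IsStrictLinearOrderOn Y (swapRel a b L) ↔ IsStrictLinearOrderOn Y L := by
  constructor
  · intro h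
    have h2 := h.of_swapRel
    rwa [image_swap_self ha hb] at h2
  · intro h
    have h2 := h.swapRel_mem a b
    rwa [image_swap_self ha hb] at h2

lemma firstSecond_swap_mp {Y : Finset C} {a b : C} (ha : a ∈ Y) (hab : a ≠ b)
    {L : C → C → Prop} (h : firstSecond Y b a L) :
    firstSecond Y a b (swapRel a b L) := by
  obtain ⟨h1, h2⟩ := h
  constructor
  · intro z hz hza
    show L (Equiv.swap a b a) (Equiv.swap a b z)
    rw [Equiv.swap_apply_left]
    rcases eq_or_ne z b with rfl | hzb
    · rw [Equiv.swap_apply_right]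
      exact h1 a ha hab
    · rw [Equiv.swap_apply_of_ne_of_ne hza hzb]
      exact h1 z hz hzb
  · intro z hz hza hzb
    show L (Equiv.swap a b b) (Equiv.swap a b z)
    rw [Equiv.swap_apply_right, Equiv.swap_apply_of_ne_of_ne hza hzb]
    exact h2 z hz hzb hza

lemma firstSecond_swap_iff {Y : Finset C} {a b : C} (ha : a ∈ Y) (hb : b ∈ Y)
    (hab : a ≠ b) (L : C → C → Prop) :
    firstSecond Y a b (swapRel a b L) ↔ firstSecond Y b a L := by
  constructor
  · intro h
    have h2 := firstSecond_swap_mp hb hab.symm (L := swapRel a b L) h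
    rwa [swapRel_comm, swapRel_swapRel_s15] at h2
  · exact firstSecond_swap_mp ha hab

lemma blockCount_swap {Y : Finset C} {a b : C} (ha : a ∈ Y) (hb : b ∈ Y)
    (hab : a ≠ b) (L : C → C → Prop) :
    blockCount Y a b (swapRel a b L) = blockCount Y b a L := by
  unfold blockCount
  by_cases h : IsStrictLinearOrderOn Y L ∧ firstSecond Y b a L
  · rw [if_pos h, if_pos ⟨(slo_swap_iff ha hb L).mpr h.1,
      (firstSecond_swap_iff ha hb hab L).mpr h.2⟩]
  · rw [if_neg h, if_neg (fun hc => h ⟨(slo_swap_iff ha hb L).mp hc.1,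
      (firstSecond_swap_iff ha hb hab L).mp hc.2⟩)]

lemma restrictRel_swap {Y Z : Finset C} {a b : C} {L : C → C → Prop}
    (hslo : IsStrictLinearOrderOn Y L) (hfs : firstSecond Y b a L)
    (hab : a ≠ b) (hnot : ¬(a ∈ Z ∧ b ∈ Z)) (hZY : Z ⊆ Y) :
    restrictRel Z (swapRel a b L) = restrictRel Z L := by
  obtain ⟨h1, h2⟩ := hfs
  have key : ∀ x ∈ Z, ∀ y ∈ Z, (L (Equiv.swap a b x) (Equiv.swap a b y) ↔ L x y) := by
    intro x hx y hy
    have hxY := hZY hx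
    have hyY := hZY hy
    rcases eq_or_ne x a with hxa | hxa
    · rw [hxa, Equiv.swap_apply_left]
      rcases eq_or_ne y a with hya | hya
      · rw [hya, Equiv.swap_apply_left]
        exact iff_of_false (hslo.1 b) (hslo.1 a)
      · have hyb : y ≠ b := fun hyb => hnot ⟨hxa ▸ hx, hyb ▸ hy⟩
        rw [Equiv.swap_apply_of_ne_of_ne hya hyb]
        exact iff_of_true (h1 y hyY hyb) (h2 y hyY hyb hya)
    · rcases eq_or_ne x b with hxb | hxb
      · rw [hxb, Equiv.swap_apply_right]
        rcases eq_or_ne y b with hyb | hyb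
        · rw [hyb, Equiv.swap_apply_right]
          exact iff_of_false (hslo.1 a) (hslo.1 b)
        · have hya : y ≠ a := fun hya => hnot ⟨hya ▸ hy, hxb ▸ hx⟩
          rw [Equiv.swap_apply_of_ne_of_ne hya hyb]
          exact iff_of_true (h2 y hyY hyb hya) (h1 y hyY hyb)
      · rw [Equiv.swap_apply_of_ne_of_ne hxa hxb]
        rcases eq_or_ne y a with hya | hya
        · rw [hya, Equiv.swap_apply_left]
          exact iff_of_false (slo_asymm hslo (h1 x hxY hxb))
            (slo_asymm hslo (h2 x hxY hxb hxa))
        · rcases eq_or_ne y b with hyb | hyb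
          · rw [hyb, Equiv.swap_apply_right]
            exact iff_of_false (slo_asymm hslo (h2 x hxY hxb hxa))
              (slo_asymm hslo (h1 x hxY hxb))
          · rw [Equiv.swap_apply_of_ne_of_ne hya hyb]
  funext x y
  apply propext
  constructor
  · rintro ⟨hL, hx, hy⟩
    exact ⟨(key x hx y hy).mp hL, hx, hy⟩
  · rintro ⟨hL, hx, hy⟩
    exact ⟨(key x hx y hy).mpr hL, hx, hy⟩

/-- The restricted block sum `∑_{L' : L'|_Z = L} 𝐋_{ab-Y}(L')`. -/
def blockSum (Y Z : Finset C) (L : C → C → Prop) (a b : C) : ℤ :=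
  ∑ L' ∈ SLOFinset Y, if restrictRel Z L' = L then blockCount Y a b L' else 0

lemma blockSum_symm {Y Z : Finset C} (hZY : Z ⊆ Y) {a b : C} (ha : a ∈ Y) (hb : b ∈ Y)
    (hab : a ≠ b) (hnot : ¬(a ∈ Z ∧ b ∈ Z)) (L : C → C → Prop) :
    blockSum Y Z L a b = blockSum Y Z L b a := by
  unfold blockSum
  refine Finset.sum_bij (fun L' _ => swapRel b a L') ?_ ?_ ?_ ?_
  · intro L' hL'
    exact mem_SLOFinset.mpr ((slo_swap_iff hb ha L').mpr (mem_SLOFinset.mp hL'))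
  · intro L1 h1 L2 h2 heq
    have := congrArg (swapRel b a) heq
    rwa [swapRel_swapRel_s15, swapRel_swapRel_s15] at this
  · intro L'' hL''
    exact ⟨swapRel b a L'',
      mem_SLOFinset.mpr ((slo_swap_iff hb ha L'').mpr (mem_SLOFinset.mp hL'')),
      swapRel_swapRel_s15 b a L''⟩
  · intro L' hL'
    rw [blockCount_swap hb ha hab.symm]
    by_cases hc : IsStrictLinearOrderOn Y L' ∧ firstSecond Y a b L'
    · rw [restrictRel_swap hc.1 hc.2 hab.symm (fun h => hnot ⟨h.2, h.1⟩) hZY]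
    · have hz : blockCount Y a b L' = 0 := if_neg hc
      rw [hz]
      simp

/-- The restricted sum of `𝐋_Y` counts. -/
def alphaSum (Y Z : Finset C) (L : C → C → Prop) : ℤ :=
  ∑ L' ∈ SLOFinset Y, if restrictRel Z L' = L then allOrdersCount Y L' else 0

lemma finsum_count (Y Z V : Finset C) (E : C → C → Prop) (w : C → C → ℤ) (α : ℤ)
    (L : C → C → Prop) :
    (∑ᶠ L', if restrictRel Z L' = L then
        (α * allOrdersCount Y L' + ∑ p ∈ V ×ˢ V, (if E p.1 p.2 then
          w p.1 p.2 * (blockCount Y p.1 p.2 L' - blockCount Y p.2 p.1 L') else 0)) else 0)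
    = α * alphaSum Y Z L + ∑ p ∈ V ×ˢ V, (if E p.1 p.2 then
        w p.1 p.2 * (blockSum Y Z L p.1 p.2 - blockSum Y Z L p.2 p.1) else 0) := by
  have hzero : ∀ L' : C → C → Prop, ¬ IsStrictLinearOrderOn Y L' →
      α * allOrdersCount Y L' + ∑ p ∈ V ×ˢ V, (if E p.1 p.2 then
        w p.1 p.2 * (blockCount Y p.1 p.2 L' - blockCount Y p.2 p.1 L') else 0) = 0 := by
    intro L' h
    have hall : allOrdersCount Y L' = 0 := if_neg h
    have hbl : ∀ a b : C, blockCount Y a b L' = 0 :=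
      fun a b => if_neg (fun hc => h hc.1)
    rw [hall, mul_zero, zero_add]
    refine Finset.sum_eq_zero fun p _ => ?_
    rw [hbl, hbl, sub_self, mul_zero]
    split <;> rfl
  rw [finsum_eq_sum_SLO _ (fun L' h => by
    by_contra hc
    apply h
    by_cases hif : restrictRel Z L' = L
    · rw [if_pos hif]
      exact hzero L' hc
    · exact if_neg hif)]
  have step : ∀ L' ∈ SLOFinset Y,
      (if restrictRel Z L' = L then
        (α * allOrdersCount Y L' + ∑ p ∈ V ×ˢ V, (if E p.1 p.2 then
          w p.1 p.2 * (blockCount Y p.1 p.2 L' - blockCount Y p.2 p.1 L') else 0)) else 0)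
      = α * (if restrictRel Z L' = L then allOrdersCount Y L' else 0)
        + ∑ p ∈ V ×ˢ V, (if E p.1 p.2 then w p.1 p.2 *
            ((if restrictRel Z L' = L then blockCount Y p.1 p.2 L' else 0)
             - (if restrictRel Z L' = L then blockCount Y p.2 p.1 L' else 0)) else 0) := by
    intro L' _
    by_cases hif : restrictRel Z L' = L <;> simp [hif]
  rw [Finset.sum_congr rfl step, Finset.sum_add_distrib]
  congr 1
  · rw [← Finset.mul_sum]
    rfl
  · rw [Finset.sum_comm]
    refine Finset.sum_congr rfl fun p _ => ?_
    by_cases hE : E p.1 p.2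
    · simp only [if_pos hE]
      rw [← Finset.mul_sum, Finset.sum_sub_distrib]
      rfl
    · simp [hE]

lemma sum_edge_restrict {Y Z V : Finset C} (hZY : Z ⊆ Y) (hZV : Z ⊆ V) (hVY : V ⊆ Y)
    (E E' : C → C → Prop) (hE : ∀ x y, E x y → ¬ E y x)
    (hE' : ∀ x y, E' x y ↔ (E x y ∧ x ∈ Z ∧ y ∈ Z))
    (w w' : C → C → ℤ) (hw : ∀ x y, x ∈ Z → y ∈ Z → w' x y = w x y)
    (L : C → C → Prop) :
    (∑ p ∈ Z ×ˢ Z, if E' p.1 p.2 then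
        w' p.1 p.2 * (blockSum Y Z L p.1 p.2 - blockSum Y Z L p.2 p.1) else 0)
    = ∑ p ∈ V ×ˢ V, if E p.1 p.2 then
        w p.1 p.2 * (blockSum Y Z L p.1 p.2 - blockSum Y Z L p.2 p.1) else 0 := by
  have h1 : (∑ p ∈ Z ×ˢ Z, if E' p.1 p.2 then
        w' p.1 p.2 * (blockSum Y Z L p.1 p.2 - blockSum Y Z L p.2 p.1) else 0)
      = ∑ p ∈ Z ×ˢ Z, if E p.1 p.2 then
        w p.1 p.2 * (blockSum Y Z L p.1 p.2 - blockSum Y Z L p.2 p.1) else 0 := by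
    refine Finset.sum_congr rfl fun p hp => ?_
    obtain ⟨hp1, hp2⟩ := Finset.mem_product.mp hp
    by_cases hEp : E p.1 p.2
    · rw [if_pos ((hE' p.1 p.2).mpr ⟨hEp, hp1, hp2⟩), if_pos hEp, hw _ _ hp1 hp2]
    · rw [if_neg (fun hc => hEp ((hE' p.1 p.2).mp hc).1), if_neg hEp]
  rw [h1]
  refine Finset.sum_subset (Finset.product_subset_product hZV hZV) fun p hp hpz => ?_
  by_cases hEp : E p.1 p.2
  · obtain ⟨hp1, hp2⟩ := Finset.mem_product.mp hp
    have hne : p.1 ≠ p.2 := fun heq => (hE p.1 p.2 hEp) (heq ▸ hEp)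
    have hnot : ¬(p.1 ∈ Z ∧ p.2 ∈ Z) :=
      fun hc => hpz (Finset.mem_product.mpr ⟨hc.1, hc.2⟩)
    rw [if_pos hEp, blockSum_symm hZY (hVY hp1) (hVY hp2) hne hnot, sub_self, mul_zero]
  · exact if_neg hEp

lemma restrict_count_eq (Y Z V : Finset C) (hZY : Z ⊆ Y) (hZV : Z ⊆ V) (hVY : V ⊆ Y)
    (E E' : C → C → Prop) (hE : ∀ x y, E x y → ¬ E y x)
    (hE' : ∀ x y, E' x y ↔ (E x y ∧ x ∈ Z ∧ y ∈ Z))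
    (w w' : C → C → ℤ) (hw : ∀ x y, x ∈ Z → y ∈ Z → w' x y = w x y)
    (α : ℤ) (L : C → C → Prop) :
    (∑ᶠ L', if restrictRel Z L' = L then
        (α * allOrdersCount Y L' + ∑ p ∈ Z ×ˢ Z, (if E' p.1 p.2 then
          w' p.1 p.2 * (blockCount Y p.1 p.2 L' - blockCount Y p.2 p.1 L') else 0)) else 0)
    = ∑ᶠ L', if restrictRel Z L' = L then
        (α * allOrdersCount Y L' + ∑ p ∈ V ×ˢ V, (if E p.1 p.2 then
          w p.1 p.2 * (blockCount Y p.1 p.2 L' - blockCount Y p.2 p.1 L') else 0)) else 0 :=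
  calc _ = α * alphaSum Y Z L + ∑ p ∈ Z ×ˢ Z, (if E' p.1 p.2 then
          w' p.1 p.2 * (blockSum Y Z L p.1 p.2 - blockSum Y Z L p.2 p.1) else 0) :=
        finsum_count Y Z Z E' w' α L
    _ = α * alphaSum Y Z L + ∑ p ∈ V ×ˢ V, (if E p.1 p.2 then
          w p.1 p.2 * (blockSum Y Z L p.1 p.2 - blockSum Y Z L p.2 p.1) else 0) := by
        rw [sum_edge_restrict hZY hZV hVY E E' hE hE' w w' hw L]
    _ = _ := (finsum_count Y Z V E w α L).symm
lemma bigLCount_eq (Y : Finset C) (T : WeakTournament C) (L' : C → C → Prop) :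
    bigLCount Y T L' = (1:ℤ) * allOrdersCount Y L' + ∑ p ∈ T.verts ×ˢ T.verts,
      (if T.edge p.1 p.2 then
        (1:ℤ) * (blockCount Y p.1 p.2 L' - blockCount Y p.2 p.1 L') else 0) := by
  simp [bigLCount]

lemma part1_aux {Y : Finset C} (T : WeakTournament C) (hT : T.verts ⊆ Y) (Z : Finset C)
    (hZ : Z.Nonempty) (hZT : Z ⊆ T.verts) (h1 : (T.restrict Z hZ hZT).verts ⊆ Y)
    (h2 : Z ⊆ (profileRep Y T hT).cands) :
    profileRep Y (T.restrict Z hZ hZT) h1 = (profileRep Y T hT).restrict Z hZ h2 := by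
  have key : profileRep Y (T.restrict Z hZ hZT) h1
      = (bigL Y T hT).restrict Z hZ (hZT.trans hT) := by
    refine GAProfile.ext' rfl ?_
    funext L
    show (∑ᶠ L', if restrictRel Z L' = L then bigLCount Y (T.restrict Z hZ hZT) L' else 0)
        = ∑ᶠ L', if restrictRel Z L' = L then bigLCount Y T L' else 0
    calc (∑ᶠ L', if restrictRel Z L' = L then bigLCount Y (T.restrict Z hZ hZT) L' else 0)
        = ∑ᶠ L', if restrictRel Z L' = L then
            ((1:ℤ) * allOrdersCount Y L' + ∑ p ∈ Z ×ˢ Z,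
              (if (T.restrict Z hZ hZT).edge p.1 p.2 then
                (1:ℤ) * (blockCount Y p.1 p.2 L' - blockCount Y p.2 p.1 L') else 0)) else 0 :=
          finsum_congr fun L' => congrArg (fun t => if restrictRel Z L' = L then t else 0)
            (bigLCount_eq Y (T.restrict Z hZ hZT) L')
      _ = ∑ᶠ L', if restrictRel Z L' = L then
            ((1:ℤ) * allOrdersCount Y L' + ∑ p ∈ T.verts ×ˢ T.verts,
              (if T.edge p.1 p.2 then
                (1:ℤ) * (blockCount Y p.1 p.2 L' - blockCount Y p.2 p.1 L') else 0)) else 0 :=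
          restrict_count_eq Y Z T.verts (hZT.trans hT) hZT hT T.edge
            (T.restrict Z hZ hZT).edge T.edge_asymm (fun x y => Iff.rfl)
            (fun _ _ => 1) (fun _ _ => 1) (fun _ _ _ _ => rfl) 1 L
      _ = ∑ᶠ L', if restrictRel Z L' = L then bigLCount Y T L' else 0 :=
          finsum_congr fun L' => congrArg (fun t => if restrictRel Z L' = L then t else 0)
            (bigLCount_eq Y T L').symm
  rw [key]
  exact (GAProfile.restrict_restrict (bigL Y T hT) T.verts_nonempty hZ hT h2).symm

lemma part2_aux {Y : Finset C} (m : ℕ) (T : WeightedWeakTournament C) (hT : T.verts ⊆ Y)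
    (Z : Finset C) (hZ : Z.Nonempty) (hZT : Z ⊆ T.verts)
    (h1 : (T.restrict Z hZ hZT).verts ⊆ Y) (h2 : Z ⊆ (profileRepW Y m T hT).cands) :
    profileRepW Y m (T.restrict Z hZ hZT) h1 = (profileRepW Y m T hT).restrict Z hZ h2 := by
  have key : profileRepW Y m (T.restrict Z hZ hZT) h1
      = (bigLW Y m T hT).restrict Z hZ (hZT.trans hT) := by
    refine GAProfile.ext' rfl ?_
    funext L
    show (∑ᶠ L', if restrictRel Z L' = L then bigLWCount Y m (T.restrict Z hZ hZT) L' else 0)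
        = ∑ᶠ L', if restrictRel Z L' = L then bigLWCount Y m T L' else 0
    exact restrict_count_eq Y Z T.verts (hZT.trans hT) hZT hT T.edge
      (T.restrict Z hZ hZT).edge T.edge_asymm (fun x y => Iff.rfl)
      (fun x y => T.wt x y / psi Y) (fun x y => (T.restrict Z hZ hZT).wt x y / psi Y)
      (fun x y hx hy => by
        show (if x ∈ Z ∧ y ∈ Z then T.wt x y else 0) / psi Y = T.wt x y / psi Y
        rw [if_pos ⟨hx, hy⟩]) (m : ℤ) L
  rw [key]
  exact (GAProfile.restrict_restrict (bigLW Y m T hT) T.verts_nonempty hZ hT h2).symm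

end RestrictionProof


/-- The profile representation commutes with restriction: for any
finite `Y ⊆ 𝒳`, weak tournament `T` with `X(T) ⊆ Y`, `m ∈ ℤ⁺`, weighted weak
tournament `𝒯 ∈ 𝕎𝕋^w_{Y,m}`, and nonempty `Z` included in the vertices,
(1) `𝔓_Y(T|_Z) = 𝔓_Y(T)|_Z` and (2) `𝔓_{Y,m}(𝒯|_Z) = 𝔓_{Y,m}(𝒯)|_Z`. -/
theorem profileRep_restrict_comm (C : Type) [Infinite C] (Y : Finset C) :
    (∀ (T : WeakTournament C) (hT : T.verts ⊆ Y) (Z : Finset C) (hZ : Z.Nonempty)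
        (hZT : Z ⊆ T.verts) (h1 : (T.restrict Z hZ hZT).verts ⊆ Y)
        (h2 : Z ⊆ (profileRep Y T hT).cands),
      profileRep Y (T.restrict Z hZ hZT) h1 = (profileRep Y T hT).restrict Z hZ h2) ∧
    (∀ (m : ℕ), 0 < m → ∀ (T : WeightedWeakTournament C), MemWTw Y m T →
      ∀ (hT : T.verts ⊆ Y) (Z : Finset C) (hZ : Z.Nonempty) (hZT : Z ⊆ T.verts)
        (h1 : (T.restrict Z hZ hZT).verts ⊆ Y)
        (h2 : Z ⊆ (profileRepW Y m T hT).cands),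
      profileRepW Y m (T.restrict Z hZ hZT) h1 =
        (profileRepW Y m T hT).restrict Z hZ h2) :=
  ⟨fun T hT Z hZ hZT h1 h2 => part1_aux T hT Z hZ hZT h1 h2,
    fun m _ T _ hT Z hZ hZT h1 h2 => part2_aux m T hT Z hZ hZT h1 h2⟩
end
end
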